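/- Let $n \ge 2$ and let $p$ be an odd prime not dividing $d$. The number of isotropic lines in a non-degenerate quadratic space of dimension $n$ and determinant class $d$ over $\mathbb{Z}/p$ equals $1+p+\cdots+p^{n-2}$ if $n$ is odd, and $1+p+\cdots+p^{n-2}+\left(\frac{(-1)^{n/2} d}{p}\right) p^{n/2-1}$ if $n$ is even, where $(\tfrac{\cdot}{p})$ is the Legendre symbol. -/

import Mathlib

open Finset

private lemma addChar_map_sum {A M : Type*} [AddCommMonoid A] [CommMonoid M] (ψ : AddChar A M)
    {ι : Type*} (s : Finset ι) (f : ι → A) : ψ (∑ i ∈ s, f i) = ∏ i ∈ s, ψ (f i) := by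
  classical
  induction s using Finset.cons_induction with
  | empty => simp
  | cons i s hi ih =>
    rw [Finset.sum_cons, Finset.prod_cons, AddChar.map_add_eq_mul, ih]

private lemma count_zeros (p : ℕ) [Fact p.Prime] {α : Type*} [Fintype α]
    (f : α → ZMod p) {ψ : AddChar (ZMod p) ℂ} (hψ : ψ.IsPrimitive) :
    (Nat.card {x : α // f x = 0} : ℂ) * p = ∑ x : α, ∑ t : ZMod p, ψ (t * f x) := by
  classical
  have h : ∀ x : α, ∑ t : ZMod p, ψ (t * f x) = if f x = 0 then (p : ℂ) else 0 := by
    intro x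
    simpa [ZMod.card] using AddChar.sum_mulShift (f x) hψ
  rw [Finset.sum_congr rfl fun x _ => h x, Finset.sum_ite, Finset.sum_const, Finset.sum_const,
    smul_zero, add_zero, nsmul_eq_mul]
  rw [Nat.card_eq_fintype_card, Fintype.card_subtype, mul_comm]

private lemma sq_char_sum (p : ℕ) [Fact p.Prime] (hp2 : p ≠ 2) {ψ : AddChar (ZMod p) ℂ}
    (hψ : ψ.IsPrimitive) {a : ZMod p} (ha : a ≠ 0) :
    ∑ x : ZMod p, ψ (a * x ^ 2) =
      ((quadraticChar (ZMod p) a : ℤ) : ℂ) *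
        gaussSum ((quadraticChar (ZMod p)).ringHomComp (Int.castRingHom ℂ)) ψ := by
  classical
  have hchar : ringChar (ZMod p) ≠ 2 := by
    rw [ZMod.ringChar_zmod_n]; exact hp2
  set χ := (quadraticChar (ZMod p)).ringHomComp (Int.castRingHom ℂ) with hχ
  have step1 : ∑ x : ZMod p, ψ (a * x ^ 2) =
      ∑ y : ZMod p, (((quadraticChar (ZMod p) y : ℤ) : ℂ) + 1) * ψ (a * y) := by
    rw [← Finset.sum_fiberwise (univ : Finset (ZMod p)) (fun x => x ^ 2) (fun x => ψ (a * x ^ 2))]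
    refine Finset.sum_congr rfl fun y _ => ?_
    have : ∀ x ∈ univ.filter (fun x : ZMod p => x ^ 2 = y), ψ (a * x ^ 2) = ψ (a * y) := by
      intro x hx
      rw [(Finset.mem_filter.mp hx).2]
    rw [Finset.sum_congr rfl this, Finset.sum_const, nsmul_eq_mul]
    congr 1
    have hcard := quadraticChar_card_sqrts hchar y
    have : ({x : ZMod p | x ^ 2 = y}.toFinset).card
        = (univ.filter (fun x : ZMod p => x ^ 2 = y)).card := by
      congr 1
      ext x
      simp
    rw [this] at hcard
    exact_mod_cast congrArg (fun z : ℤ => (z : ℂ)) hcard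
  rw [step1]
  simp_rw [add_mul, one_mul, Finset.sum_add_distrib]
  have h2 : ∑ y : ZMod p, ψ (a * y) = 0 := by
    have := AddChar.sum_mulShift a hψ
    rw [if_neg ha] at this
    simpa [mul_comm] using this
  rw [h2, add_zero]
  have h3 : ∑ y : ZMod p, ((quadraticChar (ZMod p) y : ℤ) : ℂ) * ψ (a * y)
      = gaussSum χ (AddChar.mulShift ψ a) := by
    simp [gaussSum, AddChar.mulShift_apply, hχ, MulChar.ringHomComp_apply]
  rw [h3]
  have hu : (Units.mk0 a ha : ZMod p) = a := rfl
  have h4 := gaussSum_mulShift χ ψ (Units.mk0 a ha)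
  have hsq : χ a * χ a = 1 := by
    have := quadraticChar_sq_one (F := ZMod p) ha
    rw [pow_two] at this
    simp only [hχ, MulChar.ringHomComp_apply]
    simp only [eq_intCast]
    exact_mod_cast congrArg (fun z : ℤ => (z : ℂ)) this
  have : χ a * (χ a * gaussSum χ (AddChar.mulShift ψ a)) = χ a * gaussSum χ ψ := by
    rw [hu] at h4; rw [h4]
  rw [← mul_assoc, hsq, one_mul] at this
  rw [this]
  simp [hχ, MulChar.ringHomComp_apply]

private lemma diag_count (p : ℕ) [Fact p.Prime] (hp2 : p ≠ 2) {n : ℕ} (a : Fin n → ZMod p)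
    (ha : ∀ i, a i ≠ 0) :
    (Nat.card {c : Fin n → ZMod p // ∑ i, a i * c i ^ 2 = 0} : ℤ) * p =
      (p : ℤ) ^ n + (if Even n then
        ((quadraticChar (ZMod p) (-1)) ^ (n / 2) * quadraticChar (ZMod p) (∏ i, a i) : ℤ) *
          ((p : ℤ) ^ (n / 2) * ((p : ℤ) - 1)) else 0) := by
  classical
  have hp : p.Prime := Fact.out
  haveI : NeZero p := ⟨hp.ne_zero⟩
  have hchar : ringChar (ZMod p) ≠ 2 := by rw [ZMod.ringChar_zmod_n]; exact hp2
  have hζ := Complex.isPrimitiveRoot_exp p hp.ne_zero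
  set ψ : AddChar (ZMod p) ℂ :=
    AddChar.zmodChar p ((IsPrimitiveRoot.iff_def _ p).mp hζ).1 with hψdef
  have hψ : ψ.IsPrimitive := AddChar.zmodChar_primitive_of_primitive_root p hζ
  set χ : MulChar (ZMod p) ℂ := (quadraticChar (ZMod p)).ringHomComp (Int.castRingHom ℂ) with hχ
  have hχ1 : χ ≠ 1 :=
    (MulChar.ringHomComp_ne_one_iff (fun x y h => by simpa using h)).mpr
      (quadraticChar_ne_one hchar)
  have hquad : χ.IsQuadratic := (quadraticChar_isQuadratic _).comp _
  have hg2 : gaussSum χ ψ ^ 2 = χ (-1) * p := by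
    have := gaussSum_sq hχ1 hquad hψ
    rwa [ZMod.card] at this
  set g : ℂ := gaussSum χ ψ with hg
  set N : ℕ := Nat.card {c : Fin n → ZMod p // ∑ i, a i * c i ^ 2 = 0} with hN
  have key := count_zeros p (fun c : Fin n → ZMod p => ∑ i, a i * c i ^ 2) hψ
  rw [Finset.sum_comm] at key
  have inner : ∀ t : ZMod p, (∑ c : Fin n → ZMod p, ψ (t * ∑ i, a i * c i ^ 2))
      = ∏ i, ∑ x : ZMod p, ψ (t * a i * x ^ 2) := by
    intro t
    have h1 : ∀ c : Fin n → ZMod p, ψ (t * ∑ i, a i * c i ^ 2)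
        = ∏ i, ψ (t * a i * c i ^ 2) := by
      intro c
      rw [Finset.mul_sum, addChar_map_sum]
      exact Finset.prod_congr rfl fun i _ => by rw [mul_assoc]
    rw [Finset.sum_congr rfl fun c _ => h1 c]
    exact (Fintype.prod_sum (fun i x => ψ (t * a i * x ^ 2))).symm
  rw [Finset.sum_congr rfl fun t _ => inner t,
    ← Finset.sum_erase_add _ _ (Finset.mem_univ (0 : ZMod p))] at key
  have h0 : (∏ i : Fin n, ∑ x : ZMod p, ψ ((0 : ZMod p) * a i * x ^ 2)) = (p : ℂ) ^ n := by
    have h1 : ∀ i : Fin n, (∑ x : ZMod p, ψ ((0 : ZMod p) * a i * x ^ 2)) = (p : ℂ) := by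
      intro i
      simp [ZMod.card]
    rw [Finset.prod_congr rfl fun i _ => h1 i, Finset.prod_const, Finset.card_univ,
      Fintype.card_fin]
  rw [h0] at key
  have hterm : ∀ t ∈ (univ : Finset (ZMod p)).erase 0,
      (∏ i, ∑ x : ZMod p, ψ (t * a i * x ^ 2))
        = ((quadraticChar (ZMod p) t : ℤ) : ℂ) ^ n *
          (((quadraticChar (ZMod p) (∏ i, a i) : ℤ) : ℂ) * g ^ n) := by
    intro t ht
    have ht0 : t ≠ 0 := (Finset.mem_erase.mp ht).1
    have h1 : ∀ i : Fin n, (∑ x : ZMod p, ψ (t * a i * x ^ 2))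
        = ((quadraticChar (ZMod p) (t * a i) : ℤ) : ℂ) * g :=
      fun i => sq_char_sum p hp2 hψ (mul_ne_zero ht0 (ha i))
    rw [Finset.prod_congr rfl fun i _ => h1 i, Finset.prod_mul_distrib, Finset.prod_const,
      Finset.card_univ, Fintype.card_fin]
    have h2 : ∏ i : Fin n, quadraticChar (ZMod p) (t * a i)
        = quadraticChar (ZMod p) t ^ n * quadraticChar (ZMod p) (∏ i, a i) := by
      simp_rw [map_mul]
      rw [Finset.prod_mul_distrib, Finset.prod_const, Finset.card_univ, Fintype.card_fin,
        ← map_prod]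
    have h3 : (∏ i : Fin n, ((quadraticChar (ZMod p) (t * a i) : ℤ) : ℂ))
        = ((quadraticChar (ZMod p) t : ℤ) : ℂ) ^ n *
          ((quadraticChar (ZMod p) (∏ i, a i) : ℤ) : ℂ) := by exact_mod_cast h2
    rw [h3]
    ring
  rw [Finset.sum_congr rfl hterm] at key
  -- now key : ↑N * ↑p = (∑ t in erase univ 0, (χℤ t)^n * (χℤ(∏a) * g^n)) + ↑p^n
  rcases Nat.even_or_odd n with he | ho
  · -- even case
    obtain ⟨m, hm⟩ := he
    have hn2 : n = 2 * m := by rw [hm, two_mul]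
    have hnd2 : n / 2 = m := by rw [hn2, Nat.mul_div_cancel_left _ two_pos]
    have hone : ∀ t ∈ (univ : Finset (ZMod p)).erase 0,
        ((quadraticChar (ZMod p) t : ℤ) : ℂ) ^ n *
          (((quadraticChar (ZMod p) (∏ i, a i) : ℤ) : ℂ) * g ^ n)
        = ((quadraticChar (ZMod p) (∏ i, a i) : ℤ) : ℂ) * g ^ n := by
      intro t ht
      have ht0 : t ≠ 0 := (Finset.mem_erase.mp ht).1
      have h2 : (quadraticChar (ZMod p) t) ^ 2 = 1 := quadraticChar_sq_one ht0
      have h4 : ((quadraticChar (ZMod p) t : ℤ) : ℂ) ^ n = 1 := by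
        rw [hn2, pow_mul]
        have h5 : ((quadraticChar (ZMod p) t : ℤ) : ℂ) ^ 2 = 1 := by exact_mod_cast h2
        rw [h5, one_pow]
      rw [h4, one_mul]
    rw [Finset.sum_congr rfl hone, Finset.sum_const, Finset.card_erase_of_mem (Finset.mem_univ _),
      Finset.card_univ, ZMod.card, nsmul_eq_mul, Nat.cast_sub hp.one_le, Nat.cast_one] at key
    have hgn : g ^ n = ((quadraticChar (ZMod p) (-1) : ℤ) : ℂ) ^ m * (p : ℂ) ^ m := by
      rw [hn2, pow_mul, hg2, mul_pow]
      simp [hχ, MulChar.ringHomComp_apply]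
    rw [hgn] at key
    rw [if_pos (by exact ⟨m, hm⟩ : Even n), hnd2]
    have goal : ((N : ℤ) * (p : ℤ) : ℤ) =
        ((p : ℤ) ^ n + ((quadraticChar (ZMod p) (-1)) ^ m * quadraticChar (ZMod p) (∏ i, a i) : ℤ) *
          ((p : ℤ) ^ m * ((p : ℤ) - 1))) := by
      have hcast : ((((N : ℤ) * (p : ℤ)) : ℤ) : ℂ) =
          ((((p : ℤ) ^ n + ((quadraticChar (ZMod p) (-1)) ^ m *
            quadraticChar (ZMod p) (∏ i, a i) : ℤ) *
            ((p : ℤ) ^ m * ((p : ℤ) - 1))) : ℤ) : ℂ) := by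
        push_cast
        linear_combination key
      exact_mod_cast hcast
    exact goal
  · -- odd case
    rw [if_neg (Nat.not_even_iff_odd.mpr ho)]
    have hzero : (∑ t ∈ (univ : Finset (ZMod p)).erase 0,
        ((quadraticChar (ZMod p) t : ℤ) : ℂ) ^ n *
          (((quadraticChar (ZMod p) (∏ i, a i) : ℤ) : ℂ) * g ^ n)) = 0 := by
      have h1 : ∀ t ∈ (univ : Finset (ZMod p)).erase 0,
          ((quadraticChar (ZMod p) t : ℤ) : ℂ) ^ n *
            (((quadraticChar (ZMod p) (∏ i, a i) : ℤ) : ℂ) * g ^ n)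
          = ((quadraticChar (ZMod p) t : ℤ) : ℂ) *
            (((quadraticChar (ZMod p) (∏ i, a i) : ℤ) : ℂ) * g ^ n) := by
        intro t ht
        have ht0 : t ≠ 0 := (Finset.mem_erase.mp ht).1
        have h2 : (quadraticChar (ZMod p) t) ^ n = quadraticChar (ZMod p) t := by
          rcases quadraticChar_dichotomy ht0 with h | h <;> rw [h]
          · rw [one_pow]
          · rw [ho.neg_one_pow]
        have h3 : ((quadraticChar (ZMod p) t : ℤ) : ℂ) ^ n
            = ((quadraticChar (ZMod p) t : ℤ) : ℂ) := by exact_mod_cast h2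
        rw [h3]
      rw [Finset.sum_congr rfl h1, ← Finset.sum_mul]
      have h4 : (∑ t ∈ (univ : Finset (ZMod p)).erase 0, quadraticChar (ZMod p) t) = 0 := by
        have h5 := Finset.sum_erase_add (univ : Finset (ZMod p)) (fun t => quadraticChar (ZMod p) t)
          (Finset.mem_univ (0 : ZMod p))
        rw [quadraticChar_sum_zero hchar] at h5
        simpa using h5
      have h6 : (∑ t ∈ (univ : Finset (ZMod p)).erase 0,
          ((quadraticChar (ZMod p) t : ℤ) : ℂ)) = 0 := by exact_mod_cast h4
      rw [h6, zero_mul]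
    rw [hzero, zero_add] at key
    have goal : ((N : ℤ) * (p : ℤ) : ℤ) = (p : ℤ) ^ n + 0 := by
      have hcast : ((((N : ℤ) * (p : ℤ)) : ℤ) : ℂ) = ((((p : ℤ) ^ n + 0) : ℤ) : ℂ) := by
        push_cast
        linear_combination key
      exact_mod_cast hcast
    exact goal

private lemma lines_count (p : ℕ) [Fact p.Prime] {W : Type*} [AddCommGroup W] [Module (ZMod p) W]
    [Finite W] (B : LinearMap.BilinForm (ZMod p) W) :
    Nat.card {l : Submodule (ZMod p) W // Module.finrank (ZMod p) l = 1 ∧ ∀ x ∈ l, B x x = 0}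
        * (p - 1) + 1 = Nat.card {x : W // B x x = 0} := by
  classical
  haveI : Fintype W := Fintype.ofFinite W
  haveI : Module.Finite (ZMod p) W := Module.Finite.of_finite
  haveI : Finite (Submodule (ZMod p) W) :=
    Finite.of_injective (fun l : Submodule (ZMod p) W => (l : Set W)) SetLike.coe_injective
  haveI : Fintype (Submodule (ZMod p) W) := Fintype.ofFinite _
  have hspan : ∀ (l : Submodule (ZMod p) W), Module.finrank (ZMod p) l = 1 →
      ∀ x ∈ l, x ≠ 0 → Submodule.span (ZMod p) {x} = l := by
    intro l hl x hx hx0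
    apply Submodule.eq_of_le_of_finrank_le
      ((Submodule.span_le).mpr (Set.singleton_subset_iff.mpr hx))
    rw [hl, finrank_span_singleton hx0]
  have hF : Function.Bijective
      (fun q : (Σ l : {l : Submodule (ZMod p) W //
          Module.finrank (ZMod p) l = 1 ∧ ∀ x ∈ l, B x x = 0},
          {x : W // x ∈ l.1 ∧ x ≠ 0}) =>
        (⟨q.2.1, q.1.2.2 q.2.1 q.2.2.1, q.2.2.2⟩ : {x : W // B x x = 0 ∧ x ≠ 0})) := by
    constructor
    · rintro ⟨⟨l, hl⟩, ⟨x, hx⟩⟩ ⟨⟨l', hl'⟩, ⟨x', hx'⟩⟩ h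
      simp only [Subtype.mk.injEq] at h
      obtain rfl : x = x' := h
      obtain rfl : l = l' := by
        rw [← hspan l hl.1 x hx.1 hx.2, ← hspan l' hl'.1 x hx'.1 hx'.2]
      rfl
    · rintro ⟨x, hx, hx0⟩
      refine ⟨⟨⟨Submodule.span (ZMod p) {x}, finrank_span_singleton hx0, ?_⟩,
        ⟨x, Submodule.mem_span_singleton_self x, hx0⟩⟩, rfl⟩
      intro y hy
      obtain ⟨c, rfl⟩ := Submodule.mem_span_singleton.mp hy
      simp only [map_smul, LinearMap.smul_apply, smul_eq_mul, hx, mul_zero]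
  have hcard1 : Nat.card {x : W // B x x = 0 ∧ x ≠ 0} =
      Nat.card {l : Submodule (ZMod p) W //
        Module.finrank (ZMod p) l = 1 ∧ ∀ x ∈ l, B x x = 0} * (p - 1) := by
    rw [← Nat.card_eq_of_bijective _ hF, Nat.card_eq_fintype_card, Fintype.card_sigma,
      Nat.card_eq_fintype_card]
    have hfib : ∀ l : {l : Submodule (ZMod p) W //
        Module.finrank (ZMod p) l = 1 ∧ ∀ x ∈ l, B x x = 0},
        Fintype.card {x : W // x ∈ l.1 ∧ x ≠ 0} = p - 1 := by
      intro l
      have e : {x : W // x ∈ l.1 ∧ x ≠ 0} ≃ {y : l.1 // ¬ (y = 0)} :=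
        ⟨fun x => ⟨⟨x.1, x.2.1⟩, fun hc => x.2.2 (congrArg Subtype.val hc)⟩,
          fun y => ⟨y.1.1, ⟨y.1.2, fun hc => y.2 (Subtype.ext hc)⟩⟩,
          fun x => rfl, fun y => rfl⟩
      have hcl : Fintype.card l.1 = p := by
        have hc := Module.card_eq_pow_finrank (K := ZMod p) (V := l.1)
        rw [l.2.1, ZMod.card, pow_one] at hc
        exact hc
      rw [Fintype.card_congr e, Fintype.card_subtype_compl, hcl, Fintype.card_subtype_eq]
    rw [Finset.sum_congr rfl fun l _ => hfib l, Finset.sum_const, Finset.card_univ,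
      smul_eq_mul]
  have h00 : B (0 : W) (0 : W) = 0 := by simp
  have hcard2 : Nat.card {x : W // B x x = 0} = Nat.card {x : W // B x x = 0 ∧ x ≠ 0} + 1 := by
    have e : {x : W // B x x = 0 ∧ x ≠ 0} ≃
        {y : {x : W // B x x = 0} // ¬ (y = ⟨0, h00⟩)} :=
      ⟨fun x => ⟨⟨x.1, x.2.1⟩, fun hc => x.2.2 (congrArg Subtype.val hc)⟩,
        fun y => ⟨y.1.1, ⟨y.1.2, fun hc => y.2 (Subtype.ext hc)⟩⟩,
        fun x => rfl, fun y => rfl⟩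
    rw [Nat.card_eq_fintype_card, Nat.card_eq_fintype_card, Fintype.card_congr e,
      Fintype.card_subtype_compl, Fintype.card_subtype_eq]
    have hpos : 0 < Fintype.card {x : W // B x x = 0} :=
      Fintype.card_pos_iff.mpr ⟨⟨0, h00⟩⟩
    omega
  rw [hcard2, hcard1]

/-- **Counting isotropic lines in a non-degenerate quadratic space over `ℤ/p`.**
Let `p` be an odd prime, `W` an `n`-dimensional vector space over `ℤ/p` (`n ≥ 2`) equipped
with a non-degenerate symmetric bilinear form `B` (the quadratic form being `q x = B x x`),
whose Gram determinant with respect to some basis is `d`, with `p ∤ d`.  Then the number of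
isotropic lines equals `1 + p + ⋯ + p^(n-2)` if `n` is odd, and
`1 + p + ⋯ + p^(n-2) + ((-1)^(n/2) d / p) p^(n/2-1)` if `n` is even, where `(· / p)` is the
Legendre symbol. -/
theorem stmt0 (p : ℕ) [Fact p.Prime] (hp2 : p ≠ 2)
    {W : Type*} [AddCommGroup W] [Module (ZMod p) W]
    (B : LinearMap.BilinForm (ZMod p) W)
    (hsymm : ∀ x y, B x y = B y x) (hB : B.Nondegenerate)
    (n : ℕ) (hn : 2 ≤ n) (b : Module.Basis (Fin n) (ZMod p) W)
    (d : ℤ) (hpd : ¬ (p : ℤ) ∣ d)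
    (hdet : Matrix.det (Matrix.of fun i j => B (b i) (b j)) = (d : ZMod p)) :
    (Nat.card {l : Submodule (ZMod p) W //
        Module.finrank (ZMod p) l = 1 ∧ ∀ x ∈ l, B x x = 0} : ℤ) =
      (∑ i ∈ Finset.range (n - 1), (p : ℤ) ^ i) +
        (if Even n then legendreSym p ((-1) ^ (n / 2) * d) * (p : ℤ) ^ (n / 2 - 1) else 0) := by
  classical
  have hp : p.Prime := Fact.out
  haveI : NeZero p := ⟨hp.ne_zero⟩
  have hchar : ringChar (ZMod p) ≠ 2 := by rw [ZMod.ringChar_zmod_n]; exact hp2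
  haveI : Invertible (2 : ZMod p) := invertibleOfNonzero (Ring.two_ne_zero hchar)
  haveI : Module.Finite (ZMod p) W := Module.Finite.of_basis b
  haveI : Finite W := Module.finite_of_finite (ZMod p)
  have hfr : Module.finrank (ZMod p) W = n := by
    rw [Module.finrank_eq_card_basis b, Fintype.card_fin]
  -- orthogonal basis
  obtain ⟨v0, hv0⟩ := LinearMap.BilinForm.exists_orthogonal_basis
    (B := B) ⟨fun x y => hsymm x y⟩
  set v : Module.Basis (Fin n) (ZMod p) W := v0.reindex (finCongr hfr) with hvdef
  have hv : ∀ i j : Fin n, i ≠ j → B (v i) (v j) = 0 := by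
    intro i j hij
    have : v i = v0 ((finCongr hfr).symm i) := Module.Basis.reindex_apply v0 _ i
    rw [Module.Basis.reindex_apply, Module.Basis.reindex_apply]
    exact hv0 (fun h => hij (by simpa using congrArg (finCongr hfr) h))
  set a : Fin n → ZMod p := fun i => B (v i) (v i) with hadef
  have ha : ∀ i, a i ≠ 0 := by
    intro i h0
    have hzero : ∀ y : W, B (v i) y = 0 := by
      intro y
      have hy := Module.Basis.sum_repr v y
      calc B (v i) y = B (v i) (∑ j, v.repr y j • v j) := by rw [hy]
        _ = ∑ j, v.repr y j • B (v i) (v j) := by rw [map_sum]; simp [map_smul]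
        _ = 0 := by
          refine Finset.sum_eq_zero fun j _ => ?_
          rcases eq_or_ne i j with rfl | hij
          · rw [show B (v i) (v i) = 0 from h0, smul_zero]
          · rw [hv i j hij, smul_zero]
    exact Module.Basis.ne_zero v i (hB.1 (v i) hzero)
  -- determinant comparison
  have hdne : (d : ZMod p) ≠ 0 := fun h =>
    hpd ((ZMod.intCast_zmod_eq_zero_iff_dvd d p).mp h)
  have hdet2 : quadraticChar (ZMod p) (∏ i, a i) = quadraticChar (ZMod p) ((d : ZMod p)) := by
    have hG : LinearMap.BilinForm.toMatrix v B = Matrix.diagonal a := by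
      ext i j
      rcases eq_or_ne i j with rfl | hij
      · simp [LinearMap.BilinForm.toMatrix_apply, Matrix.diagonal_apply_eq, hadef]
      · rw [LinearMap.BilinForm.toMatrix_apply, Matrix.diagonal_apply_ne _ hij, hv i j hij]
    have hbc := LinearMap.BilinForm.toMatrix_mul_basis_toMatrix b v B
    have hdetb : (LinearMap.BilinForm.toMatrix b B).det = (d : ZMod p) := by
      rw [show LinearMap.BilinForm.toMatrix b B = Matrix.of (fun i j => B (b i) (b j)) from by
        ext i j; simp [LinearMap.BilinForm.toMatrix_apply]]
      exact hdet
    haveI := b.invertibleToMatrix v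
    have hu : (b.toMatrix v).det ≠ 0 :=
      IsUnit.ne_zero (Matrix.isUnit_det_of_invertible _)
    have hprod : (∏ i, a i) = (b.toMatrix v).det ^ 2 * (d : ZMod p) := by
      have h5 := congrArg Matrix.det hbc
      rw [Matrix.det_mul, Matrix.det_mul, Matrix.det_transpose, hdetb, hG,
        Matrix.det_diagonal] at h5
      rw [← h5]; ring
    rw [hprod, map_mul, quadraticChar_sq_one' hu, one_mul]
  -- isotropic vector count in coordinates
  have expand : ∀ (y : W) (i : Fin n), B (v i) y = v.repr y i * a i := by
    intro y i
    calc B (v i) y = B (v i) (∑ j, v.repr y j • v j) := by rw [Module.Basis.sum_repr]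
      _ = ∑ j, v.repr y j • B (v i) (v j) := by rw [map_sum]; simp [map_smul]
      _ = v.repr y i * a i := by
        rw [Finset.sum_eq_single i (fun j _ hj => by rw [hv i j (Ne.symm hj), smul_zero])
          (fun h => absurd (Finset.mem_univ i) h)]
        rw [smul_eq_mul, hadef]
  have hkey : ∀ x : W, B x x = ∑ i, a i * (v.equivFun x i) ^ 2 := by
    intro x
    have h1 : B x x = ∑ i, v.repr x i * B (v i) x := by
      have h2 := congrArg (fun z => B z x) (Module.Basis.sum_repr v x)
      simp only [map_sum, LinearMap.sum_apply, map_smul, LinearMap.smul_apply,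
        smul_eq_mul] at h2
      exact h2.symm
    rw [h1]
    refine Finset.sum_congr rfl fun i _ => ?_
    rw [expand x i, Module.Basis.equivFun_apply]
    ring
  have hNcongr : Nat.card {x : W // B x x = 0}
      = Nat.card {c : Fin n → ZMod p // ∑ i, a i * c i ^ 2 = 0} := by
    refine Nat.card_congr (Equiv.subtypeEquiv v.equivFun.toEquiv fun x => ?_)
    rw [hkey x]
    rfl
  -- assemble
  have hlc := lines_count p B
  have hdc := diag_count p hp2 a ha
  rw [← hNcongr] at hdc
  rw [hdet2] at hdc
  have hleg : (legendreSym p ((-1) ^ (n / 2) * d) : ℤ)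
      = quadraticChar (ZMod p) (-1) ^ (n / 2) * quadraticChar (ZMod p) ((d : ZMod p)) := by
    have h1 : legendreSym p ((-1) ^ (n / 2) * d)
        = quadraticChar (ZMod p) ((((-1 : ℤ) ^ (n / 2) * d : ℤ) : ZMod p)) := rfl
    rw [h1]
    have h2 : (((-1 : ℤ) ^ (n / 2) * d : ℤ) : ZMod p)
        = (-1 : ZMod p) ^ (n / 2) * ((d : ℤ) : ZMod p) := by push_cast; ring
    rw [h2, map_mul, map_pow]
  have eq1 : (Nat.card {l : Submodule (ZMod p) W //
      Module.finrank (ZMod p) l = 1 ∧ ∀ x ∈ l, B x x = 0} : ℤ) * ((p : ℤ) - 1)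
      = (Nat.card {x : W // B x x = 0} : ℤ) - 1 := by
    have h3 : ((Nat.card {l : Submodule (ZMod p) W //
        Module.finrank (ZMod p) l = 1 ∧ ∀ x ∈ l, B x x = 0} * (p - 1) + 1 : ℕ) : ℤ)
        = ((Nat.card {x : W // B x x = 0} : ℕ) : ℤ) := Int.natCast_inj.mpr hlc
    push_cast [Nat.cast_sub hp.one_le] at h3
    linear_combination h3
  have hgeom : (∑ i ∈ Finset.range (n - 1), (p : ℤ) ^ i) * ((p : ℤ) - 1)
      = (p : ℤ) ^ (n - 1) - 1 := geom_sum_mul _ _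
  have hpn1 : (p : ℤ) ^ (n - 1) * p = (p : ℤ) ^ n := by
    rw [← pow_succ]
    congr 1
    exact Nat.sub_add_cancel (le_trans one_le_two hn)
  have hcancel : ((p : ℤ) - 1) * p ≠ 0 :=
    mul_ne_zero (sub_ne_zero.mpr fun h => hp.ne_one (by exact_mod_cast h))
      (Nat.cast_ne_zero.mpr hp.pos.ne')
  apply mul_right_cancel₀ hcancel
  rcases Nat.even_or_odd n with he | ho
  · rw [if_pos he] at hdc ⊢
    rw [hleg]
    have hn2 : 1 ≤ n / 2 := (Nat.one_le_div_iff (by norm_num)).mpr hn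
    have hhalf : (p : ℤ) ^ (n / 2 - 1) * p = (p : ℤ) ^ (n / 2) := by
      rw [← pow_succ]
      congr 1
      exact Nat.sub_add_cancel hn2
    linear_combination (p : ℤ) * eq1 + hdc - (p : ℤ) * hgeom - hpn1 -
      ((quadraticChar (ZMod p) (-1) ^ (n / 2) * quadraticChar (ZMod p) ((d : ZMod p)) : ℤ) *
        ((p : ℤ) - 1)) * hhalf
  · rw [if_neg (Nat.not_even_iff_odd.mpr ho)] at hdc ⊢
    linear_combination (p : ℤ) * eq1 + hdc - (p : ℤ) * hgeom - hpn1
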